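/- arXiv:2009.07888 — 8 statements merged into one kernel-verified Lean document; each statement's English description precedes it below -/
import Mathlib

section
/- Let (S, A, P, r, γ) be a finite MDP with discount factor γ ∈ [0,1). Let π₁, …, πₙ : S → A be deterministic policies with action-value functions Q^{π₁}, …, Q^{πₙ}, and let Q̂₁, …, Q̂ₙ : S × A → ℝ be approximations satisfying |Q^{πᵢ}(s,a) − Q̂ᵢ(s,a)| ≤ ε for all s ∈ S, a ∈ A, and i ∈ {1,…,n}. Define a deterministic policy π : S → A by choosing, for each s, π(s) ∈ argmax_{a ∈ A} maxᵢ Q̂ᵢ(s,a). Then the action-value function Q^π of π satisfies Q^π(s,a) ≥ maxᵢ Q^{πᵢ}(s,a) − 2ε/(1−γ) for every s ∈ S and a ∈ A (Generalized Policy Improvement). -/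
/-- **Generalized Policy Improvement (GPI).**
Given a finite MDP `(S, A, P, r, γ)` with `γ ∈ [0,1)`, deterministic policies `pol i : S → A`
(indexed by a nonempty finite index type `ι`) with action-value functions `Q i`
(the fixed points of the respective Bellman evaluation operators), and approximations
`Qhat i` with `|Q i s a - Qhat i s a| ≤ ε` for all `s, a, i`, let `polGPI` be a policy that
is greedy with respect to `(s, a) ↦ maxᵢ Qhat i s a`.  Then the action-value function
`Qgpi` of `polGPI` satisfies `Qgpi s a ≥ maxᵢ Q i s a - 2ε/(1-γ)` for all `s, a`. -/
theorem generalized_policy_improvement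
    {S A ι : Type*} [Fintype S] [Fintype A] [Fintype ι]
    [Nonempty S] [Nonempty A] [Nonempty ι]
    (P : S → A → S → ℝ)
    (hP0 : ∀ s a s', 0 ≤ P s a s')
    (hP1 : ∀ s a, ∑ s', P s a s' = 1)
    (r : S → A → S → ℝ)
    (γ : ℝ) (hγ0 : 0 ≤ γ) (hγ1 : γ < 1)
    (pol : ι → S → A)
    (Q : ι → S → A → ℝ)
    (hQ : ∀ i s a,
      Q i s a = ∑ s', P s a s' * (r s a s' + γ * Q i s' (pol i s')))
    (Qhat : ι → S → A → ℝ)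
    (ε : ℝ)
    (hε : ∀ i s a, |Q i s a - Qhat i s a| ≤ ε)
    (polGPI : S → A)
    (hgreedy : ∀ s a,
      (Finset.univ.sup' Finset.univ_nonempty fun i => Qhat i s a) ≤
        Finset.univ.sup' Finset.univ_nonempty fun i => Qhat i s (polGPI s))
    (Qgpi : S → A → ℝ)
    (hQgpi : ∀ s a,
      Qgpi s a = ∑ s', P s a s' * (r s a s' + γ * Qgpi s' (polGPI s'))) :
    ∀ s a,
      (Finset.univ.sup' Finset.univ_nonempty fun i => Q i s a) - 2 * ε / (1 - γ)
        ≤ Qgpi s a := by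

  -- ε is nonnegative
  have hε0 : 0 ≤ ε := le_trans (abs_nonneg _) (hε (Classical.arbitrary ι) (Classical.arbitrary S) (Classical.arbitrary A))
  have h1γ : 0 < 1 - γ := by linarith
  -- Step A: Q i s (pol i s) ≤ 2ε + maxⱼ Q j s (polGPI s)
  have stepA : ∀ i s, Q i s (pol i s) ≤ 2*ε + Finset.univ.sup' Finset.univ_nonempty (fun j => Q j s (polGPI s)) := by
    intro i s
    have h1 : Q i s (pol i s) ≤ Qhat i s (pol i s) + ε := by
      have := abs_le.mp (hε i s (pol i s)); linarith [this.2]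
    have h2 : Qhat i s (pol i s) ≤ Finset.univ.sup' Finset.univ_nonempty (fun j => Qhat j s (pol i s)) :=
      Finset.le_sup' (fun j => Qhat j s (pol i s)) (Finset.mem_univ i)
    have h3 := hgreedy s (pol i s)
    have h4 : Finset.univ.sup' Finset.univ_nonempty (fun j => Qhat j s (polGPI s)) ≤
        ε + Finset.univ.sup' Finset.univ_nonempty (fun j => Q j s (polGPI s)) := by
      apply Finset.sup'_le
      intro j _
      have := abs_le.mp (hε j s (polGPI s))
      have hle : Q j s (polGPI s) ≤ Finset.univ.sup' Finset.univ_nonempty (fun j => Q j s (polGPI s)) :=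
        Finset.le_sup' (fun j => Q j s (polGPI s)) (Finset.mem_univ j)
      linarith [this.1]
    linarith
  -- define D
  set D : ℝ := Finset.univ.sup' Finset.univ_nonempty
      (fun s => (Finset.univ.sup' Finset.univ_nonempty fun j => Q j s (polGPI s)) - Qgpi s (polGPI s)) with hD
  have bound : ∀ i s', Q i s' (pol i s') - Qgpi s' (polGPI s') ≤ 2*ε + D := by
    intro i s'
    have h1 := stepA i s'
    have h2 : (Finset.univ.sup' Finset.univ_nonempty fun j => Q j s' (polGPI s')) - Qgpi s' (polGPI s') ≤ D :=
      Finset.le_sup' (fun s => (Finset.univ.sup' Finset.univ_nonempty fun j => Q j s (polGPI s)) - Qgpi s (polGPI s)) (Finset.mem_univ s')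
    linarith
  have key : ∀ i s a, Q i s a - Qgpi s a ≤ γ * (2*ε + D) := by
    intro i s a
    have h1 : Q i s a - Qgpi s a
        = ∑ s', P s a s' * (γ * (Q i s' (pol i s') - Qgpi s' (polGPI s'))) := by
      rw [hQ, hQgpi, ← Finset.sum_sub_distrib]
      exact Finset.sum_congr rfl (fun s' _ => by ring)
    rw [h1]
    calc ∑ s', P s a s' * (γ * (Q i s' (pol i s') - Qgpi s' (polGPI s')))
        ≤ ∑ s', P s a s' * (γ * (2*ε + D)) := by
          apply Finset.sum_le_sum
          intro s' _
          exact mul_le_mul_of_nonneg_left (mul_le_mul_of_nonneg_left (bound i s') hγ0) (hP0 s a s')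
      _ = γ * (2*ε + D) := by rw [← Finset.sum_mul, hP1]; ring
  have hDle : D ≤ γ * (2*ε + D) := by
    apply Finset.sup'_le
    intro s _
    apply sub_le_iff_le_add.mpr
    apply Finset.sup'_le
    intro i _
    have := key i s (polGPI s)
    linarith
  have hDval : D ≤ 2*ε*γ/(1-γ) := by
    rw [le_div_iff₀ h1γ]; nlinarith
  intro s a
  have h2 : (Finset.univ.sup' Finset.univ_nonempty fun i => Q i s a) - Qgpi s a ≤ γ * (2*ε + D) := by
    apply sub_le_iff_le_add.mpr
    apply Finset.sup'_le
    intro i _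
    have := key i s a
    linarith
  have h3 : γ * (2*ε + D) ≤ 2 * ε / (1 - γ) := by
    rw [le_div_iff₀ h1γ]; nlinarith
  linarith
end

section
/- Let (S, A, P, r, γ) be a finite MDP with discount factor γ ∈ [0,1), let π : S → A be a deterministic policy, let Q : S × A → ℝ be any function, and let c ≥ 0 be a constant. If (T^π Q)(s,a) ≥ Q(s,a) − c for all s ∈ S and a ∈ A, then the action-value function Q^π of π (the unique fixed point of T^π) satisfies Q^π(s,a) ≥ Q(s,a) − c/(1−γ) for all s ∈ S and a ∈ A. -/
/-- If the Bellman evaluation operator `T^π` of a finite MDP with discount `γ ∈ [0,1)`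
satisfies `(T^π Q)(s,a) ≥ Q(s,a) - c` pointwise for some function `Q` and constant `c ≥ 0`,
then the action-value function `Qpol` of `π` (the fixed point of `T^π`) satisfies
`Qpol(s,a) ≥ Q(s,a) - c/(1-γ)` for all `s, a`. -/
theorem bellman_almost_improvement
    {S A : Type*} [Fintype S] [Fintype A] [Nonempty S] [Nonempty A]
    (P : S → A → S → ℝ)
    (hP0 : ∀ s a s', 0 ≤ P s a s')
    (hP1 : ∀ s a, ∑ s', P s a s' = 1)
    (r : S → A → S → ℝ)
    (γ : ℝ) (hγ0 : 0 ≤ γ) (hγ1 : γ < 1)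
    (pol : S → A)
    (Q : S → A → ℝ)
    (c : ℝ) (hc : 0 ≤ c)
    (hT : ∀ s a,
      Q s a - c ≤ ∑ s', P s a s' * (r s a s' + γ * Q s' (pol s')))
    (Qpol : S → A → ℝ)
    (hQpol : ∀ s a,
      Qpol s a = ∑ s', P s a s' * (r s a s' + γ * Qpol s' (pol s'))) :
    ∀ s a, Q s a - c / (1 - γ) ≤ Qpol s a := by
  have h1γ : 0 < 1 - γ := by linarith
  set D : S × A → ℝ := fun p => Q p.1 p.2 - Qpol p.1 p.2 with hD
  have hne : (Finset.univ : Finset (S × A)).Nonempty := Finset.univ_nonempty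
  set M : ℝ := Finset.univ.sup' hne D with hM
  have hle : ∀ s a, D (s, a) ≤ M := fun s a =>
    Finset.le_sup' D (Finset.mem_univ (s, a))
  -- key bound: D ≤ c + γ * M pointwise
  have hkey : ∀ s a, D (s, a) ≤ c + γ * M := by
    intro s a
    have h1 := hT s a
    have h2 := hQpol s a
    have h3 : Q s a - c - Qpol s a ≤
        ∑ s', P s a s' * (γ * (Q s' (pol s') - Qpol s' (pol s'))) := by
      have := sub_le_sub h1 (le_of_eq h2.symm)
      calc Q s a - c - Qpol s a
          ≤ ∑ s', P s a s' * (r s a s' + γ * Q s' (pol s'))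
            - ∑ s', P s a s' * (r s a s' + γ * Qpol s' (pol s')) := this
        _ = ∑ s', P s a s' * (γ * (Q s' (pol s') - Qpol s' (pol s'))) := by
            rw [← Finset.sum_sub_distrib]
            apply Finset.sum_congr rfl
            intro x _
            ring
    have h4 : ∑ s', P s a s' * (γ * (Q s' (pol s') - Qpol s' (pol s')))
        ≤ ∑ s', P s a s' * (γ * M) := by
      apply Finset.sum_le_sum
      intro x _
      exact mul_le_mul_of_nonneg_left
        (mul_le_mul_of_nonneg_left (hle x (pol x)) hγ0) (hP0 s a x)
    have h5 : ∑ s', P s a s' * (γ * M) = γ * M := by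
      rw [← Finset.sum_mul, hP1]; ring
    have : Q s a - c - Qpol s a ≤ γ * M := by
      calc Q s a - c - Qpol s a ≤ _ := h3
        _ ≤ _ := h4
        _ = γ * M := h5
    simp only [hD]
    linarith
  have hMle : M ≤ c + γ * M := by
    obtain ⟨p, _, hp⟩ := Finset.exists_mem_eq_sup' hne D
    have h := hkey p.1 p.2
    rw [Prod.mk.eta] at h
    exact hp.le.trans h
  have hMbound : M ≤ c / (1 - γ) := by
    rw [le_div_iff₀ h1γ]
    nlinarith
  intro s a
  have := le_trans (hle s a) hMbound
  simp only [hD] at this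
  linarith
end

section
/- Let M = (S, A, P, r, γ) be a finite MDP with discount factor γ ∈ [0,1), let Φ : S → ℝ be a potential function, and let M' = (S, A, P, r', γ) be the shaped MDP whose reward is r'(s,a,s') = r(s,a,s') + γ·Φ(s') − Φ(s) (potential-based reward shaping). Then the function (s,a) ↦ Q*_M(s,a) − Φ(s) is the unique fixed point of the Bellman optimality operator of M'; that is, the optimal action-value functions of the two MDPs are related by Q*_{M'}(s,a) = Q*_M(s,a) − Φ(s) for all s ∈ S and a ∈ A. -/
lemma sup'_sub_sup'_le_aux {A : Type*} (s : Finset A) (hs : s.Nonempty)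
    (f g : A → ℝ) (M : ℝ) (h : ∀ a ∈ s, f a - g a ≤ M) :
    s.sup' hs f - s.sup' hs g ≤ M := by
  rw [sub_le_iff_le_add]
  apply Finset.sup'_le
  intro a ha
  have := h a ha
  have hg := Finset.le_sup' g ha
  linarith

lemma abs_sup'_sub_sup'_le_aux {A : Type*} (s : Finset A) (hs : s.Nonempty)
    (f g : A → ℝ) (M : ℝ) (h : ∀ a ∈ s, |f a - g a| ≤ M) :
    |s.sup' hs f - s.sup' hs g| ≤ M := by
  rw [abs_le]
  constructor
  · have := sup'_sub_sup'_le_aux s hs g f M (fun a ha => by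
      have := h a ha; rw [abs_le] at this; linarith)
    linarith
  · exact sup'_sub_sup'_le_aux s hs f g M (fun a ha => by
      have := h a ha; rw [abs_le] at this; linarith)

/-- **Potential-based reward shaping and optimal Q-values.**
Let `M = (S, A, P, r, γ)` be a finite MDP with `γ ∈ [0,1)`, let `Φ : S → ℝ` be a potential
function, and let `M'` be the shaped MDP with reward `r'(s,a,s') = r(s,a,s') + γΦ(s') - Φ(s)`.
If `Qstar` is the optimal action-value function of `M` (the fixed point of the Bellman
optimality operator of `M`), then `(s,a) ↦ Qstar s a - Φ s` is the unique fixed point of the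
Bellman optimality operator of `M'`; i.e. `Q*_{M'}(s,a) = Q*_M(s,a) - Φ(s)`. -/
theorem pbrs_optimal_Q_shift
    {S A : Type*} [Fintype S] [Fintype A] [Nonempty S] [Nonempty A]
    (P : S → A → S → ℝ)
    (hP0 : ∀ s a s', 0 ≤ P s a s')
    (hP1 : ∀ s a, ∑ s', P s a s' = 1)
    (r : S → A → S → ℝ)
    (γ : ℝ) (hγ0 : 0 ≤ γ) (hγ1 : γ < 1)
    (Φ : S → ℝ)
    (Qstar : S → A → ℝ)
    (hQstar : ∀ s a,
      Qstar s a = ∑ s', P s a s' *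
        (r s a s' + γ * Finset.univ.sup' Finset.univ_nonempty fun a' => Qstar s' a')) :
    (∀ s a,
      Qstar s a - Φ s = ∑ s', P s a s' *
        ((r s a s' + γ * Φ s' - Φ s) +
          γ * Finset.univ.sup' Finset.univ_nonempty fun a' => Qstar s' a' - Φ s')) ∧
    (∀ Q' : S → A → ℝ,
      (∀ s a,
        Q' s a = ∑ s', P s a s' *
          ((r s a s' + γ * Φ s' - Φ s) +
            γ * Finset.univ.sup' Finset.univ_nonempty fun a' => Q' s' a')) →
      ∀ s a, Q' s a = Qstar s a - Φ s) := by
  have hsup : ∀ (s' : S) (f : A → ℝ) (c : ℝ),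
      (Finset.univ.sup' Finset.univ_nonempty fun a' => f a' - c) =
      (Finset.univ.sup' Finset.univ_nonempty fun a' => f a') - c := by
    intro s' f c
    simp only [sub_eq_add_neg]; rw [Finset.sup'_add]
  have hfix : ∀ s a,
      Qstar s a - Φ s = ∑ s', P s a s' *
        ((r s a s' + γ * Φ s' - Φ s) +
          γ * Finset.univ.sup' Finset.univ_nonempty fun a' => Qstar s' a' - Φ s') := by
    intro s a
    have h1 := hQstar s a
    have : (∑ s', P s a s' *
        ((r s a s' + γ * Φ s' - Φ s) +
          γ * Finset.univ.sup' Finset.univ_nonempty fun a' => Qstar s' a' - Φ s'))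
        = (∑ s', P s a s' *
          (r s a s' + γ * Finset.univ.sup' Finset.univ_nonempty fun a' => Qstar s' a'))
          - Φ s * ∑ s', P s a s' := by
      rw [Finset.mul_sum, ← Finset.sum_sub_distrib]
      apply Finset.sum_congr rfl
      intro s' _
      rw [hsup s' (fun a' => Qstar s' a') (Φ s')]
      ring
    rw [this, hP1, ← h1, mul_one]
  refine ⟨hfix, ?_⟩
  intro Q' hQ'
  -- Let W be the difference; show its sup norm M satisfies M ≤ γ M, hence M ≤ 0.
  set W : S → A → ℝ := fun s a => Q' s a - (Qstar s a - Φ s) with hW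
  have hne : (Finset.univ : Finset (S × A)).Nonempty := Finset.univ_nonempty
  set M : ℝ := Finset.univ.sup' hne (fun p : S × A => |W p.1 p.2|) with hM
  have hMle : ∀ s a, |W s a| ≤ M := fun s a =>
    Finset.le_sup' (f := fun p : S × A => |W p.1 p.2|) (Finset.mem_univ (s, a))
  have hstep : ∀ s a, |W s a| ≤ γ * M := by
    intro s a
    have h1 := hQ' s a
    have h2 := hfix s a
    have hWeq : W s a = ∑ s', P s a s' * (γ *
        ((Finset.univ.sup' Finset.univ_nonempty fun a' => Q' s' a') -
         (Finset.univ.sup' Finset.univ_nonempty fun a' => Qstar s' a' - Φ s'))) := by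
      rw [hW]
      simp only
      rw [h1, h2, ← Finset.sum_sub_distrib]
      apply Finset.sum_congr rfl
      intro s' _
      ring
    rw [hWeq]
    calc |∑ s', P s a s' * (γ *
        ((Finset.univ.sup' Finset.univ_nonempty fun a' => Q' s' a') -
         (Finset.univ.sup' Finset.univ_nonempty fun a' => Qstar s' a' - Φ s')))|
        ≤ ∑ s', |P s a s' * (γ *
        ((Finset.univ.sup' Finset.univ_nonempty fun a' => Q' s' a') -
         (Finset.univ.sup' Finset.univ_nonempty fun a' => Qstar s' a' - Φ s')))| :=
        Finset.abs_sum_le_sum_abs _ _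
      _ ≤ ∑ s', P s a s' * (γ * M) := by
        apply Finset.sum_le_sum
        intro s' _
        rw [abs_mul, abs_mul, abs_of_nonneg (hP0 s a s'), abs_of_nonneg hγ0]
        apply mul_le_mul_of_nonneg_left _ (hP0 s a s')
        apply mul_le_mul_of_nonneg_left _ hγ0
        apply abs_sup'_sub_sup'_le_aux
        intro a' _
        exact hMle s' a'
      _ = γ * M := by rw [← Finset.sum_mul, hP1, one_mul]
  have hMle' : M ≤ γ * M := by
    rw [hM]
    apply Finset.sup'_le
    intro p _
    exact hstep p.1 p.2
  have hM0 : 0 ≤ M := le_trans (abs_nonneg _) (hMle Classical.ofNonempty Classical.ofNonempty)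
  have hMeq : M ≤ 0 := by nlinarith
  intro s a
  have := hMle s a
  have : |W s a| ≤ 0 := le_trans this (le_trans hMle' (by nlinarith))
  have := abs_nonpos_iff.mp this
  rw [hW] at this
  simpa [sub_eq_zero] using this
end

section
/- Let M = (S, A, P, r, γ) be a finite MDP with discount factor γ ∈ [0,1), let Φ : S → ℝ, and let M' be the shaped MDP with reward r'(s,a,s') = r(s,a,s') + γ·Φ(s') − Φ(s). Then for every state s ∈ S, the set of actions maximizing Q*_{M'}(s,·) equals the set of actions maximizing Q*_M(s,·); consequently, a deterministic policy π : S → A is greedy with respect to Q*_{M'} (i.e., optimal in M') if and only if it is greedy with respect to Q*_M (i.e., optimal in M). Hence potential-based reward shaping preserves policy invariance. -/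
/-!
Shifting an action-value function by the potential, `Q ↦ fun s a => Q s a - Φ s`, conjugates the
Bellman optimality operator of `M` into that of the shaped MDP `M'`: the shaping terms
`γ Φ(s') - Φ(s)` cancel exactly against the shift. Since the Bellman optimality operator is a
`γ`-contraction for the sup distance, its fixed point is unique, so `Q*_{M'} = Q*_M - Φ`.
Subtracting a quantity that depends only on the state does not move any argmax over actions.
-/

open Finset Function

theorem Finset.abs_sup'_sub_sup'_le {ι : Type*} {s : Finset ι} (hs : s.Nonempty) {f g : ι → ℝ}
    {c : ℝ} (h : ∀ i ∈ s, |f i - g i| ≤ c) : |s.sup' hs f - s.sup' hs g| ≤ c := by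
  refine abs_sub_le_iff.2 ⟨?_, ?_⟩ <;> rw [sub_le_iff_le_add] <;>
    refine sup'_le _ _ fun i hi => ?_
  · linarith [(abs_sub_le_iff.1 (h i hi)).1, le_sup' g hi]
  · linarith [(abs_sub_le_iff.1 (h i hi)).2, le_sup' f hi]

theorem abs_sum_mul_le_of_abs_le {ι : Type*} [Fintype ι] {p x : ι → ℝ} {c : ℝ}
    (hp0 : ∀ i, 0 ≤ p i) (hp1 : ∑ i, p i = 1) (hx : ∀ i, |x i| ≤ c) :
    |∑ i, p i * x i| ≤ c :=
  calc |∑ i, p i * x i|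
      ≤ ∑ i, |p i * x i| := abs_sum_le_sum_abs _ _
    _ ≤ ∑ i, p i * c := sum_le_sum fun i _ => by
        rw [abs_mul, abs_of_nonneg (hp0 i)]
        exact mul_le_mul_of_nonneg_left (hx i) (hp0 i)
    _ = c := by rw [← sum_mul, hp1, one_mul]

section Bellman

variable {S A : Type*} [Fintype S] [Fintype A] [Nonempty A]

noncomputable def bellmanOptimality (P : S → A → S → ℝ) (r : S → A → S → ℝ) (γ : ℝ)
    (Q : S → A → ℝ) : S → A → ℝ :=
  fun s a => ∑ s', P s a s' * (r s a s' + γ * univ.sup' univ_nonempty fun a' => Q s' a')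

def shapedReward (r : S → A → S → ℝ) (γ : ℝ) (Φ : S → ℝ) : S → A → S → ℝ :=
  fun s a s' => r s a s' + γ * Φ s' - Φ s

variable {P : S → A → S → ℝ} {r : S → A → S → ℝ} {γ : ℝ}

theorem dist_bellmanOptimality_le (hP0 : ∀ s a s', 0 ≤ P s a s') (hP1 : ∀ s a, ∑ s', P s a s' = 1)
    (hγ0 : 0 ≤ γ) (Q₁ Q₂ : S → A → ℝ) :
    dist (bellmanOptimality P r γ Q₁) (bellmanOptimality P r γ Q₂) ≤ γ * dist Q₁ Q₂ := by
  have hγd : 0 ≤ γ * dist Q₁ Q₂ := by positivity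
  refine (dist_pi_le_iff hγd).2 fun s => (dist_pi_le_iff hγd).2 fun a => ?_
  set V : (S → A → ℝ) → S → ℝ := fun Q s' => univ.sup' univ_nonempty fun a' => Q s' a'
  have hdiff : bellmanOptimality P r γ Q₁ s a - bellmanOptimality P r γ Q₂ s a =
      ∑ s', P s a s' * (γ * (V Q₁ s' - V Q₂ s')) := by
    rw [bellmanOptimality, bellmanOptimality, ← sum_sub_distrib]
    exact sum_congr rfl fun s' _ => by ring
  have hV : ∀ s', |V Q₁ s' - V Q₂ s'| ≤ dist Q₁ Q₂ := fun s' =>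
    abs_sup'_sub_sup'_le _ fun a' _ =>
      (dist_le_pi_dist (Q₁ s') (Q₂ s') a').trans (dist_le_pi_dist Q₁ Q₂ s')
  rw [Real.dist_eq, hdiff]
  refine abs_sum_mul_le_of_abs_le (hP0 s a) (hP1 s a) fun s' => ?_
  rw [abs_mul, abs_of_nonneg hγ0]
  exact mul_le_mul_of_nonneg_left (hV s') hγ0

theorem eq_of_isFixedPt_bellmanOptimality (hP0 : ∀ s a s', 0 ≤ P s a s')
    (hP1 : ∀ s a, ∑ s', P s a s' = 1) (hγ0 : 0 ≤ γ) (hγ1 : γ < 1) {Q₁ Q₂ : S → A → ℝ}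
    (h₁ : IsFixedPt (bellmanOptimality P r γ) Q₁) (h₂ : IsFixedPt (bellmanOptimality P r γ) Q₂) :
    Q₁ = Q₂ := by
  have hcontr := dist_bellmanOptimality_le (r := r) hP0 hP1 hγ0 Q₁ Q₂
  rw [h₁.eq, h₂.eq] at hcontr
  exact dist_le_zero.1 (by nlinarith [dist_nonneg (x := Q₁) (y := Q₂)])

theorem bellmanOptimality_shapedReward (hP1 : ∀ s a, ∑ s', P s a s' = 1) (Φ : S → ℝ)
    (Q : S → A → ℝ) :
    bellmanOptimality P (shapedReward r γ Φ) γ (fun s a => Q s a - Φ s) =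
      fun s a => bellmanOptimality P r γ Q s a - Φ s := by
  funext s a
  have hV : ∀ s', (univ.sup' univ_nonempty fun a' => Q s' a' - Φ s') =
      (univ.sup' univ_nonempty fun a' => Q s' a') - Φ s' := fun s' => by
    simp_rw [sub_eq_add_neg, sup'_add]
  simp only [bellmanOptimality, shapedReward, hV]
  calc _ = ∑ s', (P s a s' * (r s a s' + γ * univ.sup' univ_nonempty fun a' => Q s' a')
          - P s a s' * Φ s) := sum_congr rfl fun s' _ => by ring
    _ = _ := by rw [sum_sub_distrib, ← sum_mul, hP1, one_mul]

theorem Function.IsFixedPt.bellmanOptimality_shapedReward (hP1 : ∀ s a, ∑ s', P s a s' = 1)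
    (Φ : S → ℝ) {Q : S → A → ℝ} (hQ : IsFixedPt (bellmanOptimality P r γ) Q) :
    IsFixedPt (bellmanOptimality P (shapedReward r γ Φ) γ) fun s a => Q s a - Φ s := by
  rw [IsFixedPt, _root_.bellmanOptimality_shapedReward hP1, hQ.eq]

end Bellman

theorem pbrs_policy_invariance_general
    {S A : Type*} [Fintype S] [Fintype A] [Nonempty A]
    (P : S → A → S → ℝ)
    (hP0 : ∀ s a s', 0 ≤ P s a s')
    (hP1 : ∀ s a, ∑ s', P s a s' = 1)
    (r : S → A → S → ℝ)
    (γ : ℝ) (hγ0 : 0 ≤ γ) (hγ1 : γ < 1)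
    (Φ : S → ℝ)
    (QM : S → A → ℝ)
    (hQM : ∀ s a,
      QM s a = ∑ s', P s a s' *
        (r s a s' + γ * Finset.univ.sup' Finset.univ_nonempty fun a' => QM s' a'))
    (QM' : S → A → ℝ)
    (hQM' : ∀ s a,
      QM' s a = ∑ s', P s a s' *
        ((r s a s' + γ * Φ s' - Φ s) +
          γ * Finset.univ.sup' Finset.univ_nonempty fun a' => QM' s' a')) :
    (∀ s, {a : A | ∀ b, QM' s b ≤ QM' s a} = {a : A | ∀ b, QM s b ≤ QM s a}) ∧
    (∀ pol : S → A,
      (∀ s b, QM' s b ≤ QM' s (pol s)) ↔ (∀ s b, QM s b ≤ QM s (pol s))) := by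
  have hfix : IsFixedPt (bellmanOptimality P r γ) QM := funext₂ fun s a => (hQM s a).symm
  have hfix' : IsFixedPt (bellmanOptimality P (shapedReward r γ Φ) γ) QM' :=
    funext₂ fun s a => (hQM' s a).symm
  obtain rfl : QM' = fun s a => QM s a - Φ s :=
    eq_of_isFixedPt_bellmanOptimality hP0 hP1 hγ0 hγ1 hfix'
      (hfix.bellmanOptimality_shapedReward hP1 Φ)
  simp only [sub_le_sub_iff_right, implies_true, and_self]

/-- **Potential-based reward shaping preserves policy invariance.**
Let `M = (S, A, P, r, γ)` be a finite MDP with `γ ∈ [0,1)`, `Φ : S → ℝ` a potential function,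
and `M'` the shaped MDP with reward `r'(s,a,s') = r(s,a,s') + γΦ(s') - Φ(s)`.
If `QM` and `QM'` are the optimal action-value functions of `M` and `M'` respectively
(fixed points of the respective Bellman optimality operators), then for every state `s`
the argmax set of `QM' s ·` equals the argmax set of `QM s ·`; consequently, a deterministic
policy is greedy with respect to `QM'` (optimal in `M'`) iff it is greedy with respect to
`QM` (optimal in `M`). -/
theorem pbrs_policy_invariance
    {S A : Type*} [Fintype S] [Fintype A] [Nonempty S] [Nonempty A]
    (P : S → A → S → ℝ)
    (hP0 : ∀ s a s', 0 ≤ P s a s')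
    (hP1 : ∀ s a, ∑ s', P s a s' = 1)
    (r : S → A → S → ℝ)
    (γ : ℝ) (hγ0 : 0 ≤ γ) (hγ1 : γ < 1)
    (Φ : S → ℝ)
    (QM : S → A → ℝ)
    (hQM : ∀ s a,
      QM s a = ∑ s', P s a s' *
        (r s a s' + γ * Finset.univ.sup' Finset.univ_nonempty fun a' => QM s' a'))
    (QM' : S → A → ℝ)
    (hQM' : ∀ s a,
      QM' s a = ∑ s', P s a s' *
        ((r s a s' + γ * Φ s' - Φ s) +
          γ * Finset.univ.sup' Finset.univ_nonempty fun a' => QM' s' a')) :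
    (∀ s, {a : A | ∀ b, QM' s b ≤ QM' s a} = {a : A | ∀ b, QM s b ≤ QM s a}) ∧
    (∀ pol : S → A,
      (∀ s b, QM' s b ≤ QM' s (pol s)) ↔ (∀ s b, QM s b ≤ QM s (pol s))) :=
  pbrs_policy_invariance_general P hP0 hP1 r γ hγ0 hγ1 Φ QM hQM QM' hQM'
end

section
/- Let S and A be nonempty finite sets with |A| ≥ 2, let γ ∈ (0,1), and let F : S × A × S → ℝ be a shaping function that is NOT potential-based, i.e., there exists no Φ : S → ℝ such that F(s,a,s') = γ·Φ(s') − Φ(s) for all s ∈ S, a ∈ A, s' ∈ S. Then there exist a transition kernel P and a reward function r : S × A × S → ℝ such that, for the MDP M = (S, A, P, r, γ) and the shaped MDP M' = (S, A, P, r + F, γ), no deterministic policy that is greedy with respect to the optimal action-value function Q*_{M'} of M' is greedy with respect to the optimal action-value function Q*_M of M. In other words, potential-based shaping is necessary for preserving policy invariance over all transition and reward functions. -/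
private lemma sum_ind {S : Type*} [Fintype S] [DecidableEq S] (t : S) (g : S → ℝ) :
    ∑ y, (if y = t then (1:ℝ) else 0) * g y = g t := by
  simp

/-- **Necessity of potential-based shaping (Ng, Harada & Russell).**
Let `S`, `A` be nonempty finite sets with `|A| ≥ 2`, let `γ ∈ (0,1)`, and let
`F : S × A × S → ℝ` be a shaping function which is *not* potential-based, i.e. there is no
`Φ : S → ℝ` with `F(s,a,s') = γΦ(s') - Φ(s)` for all `s, a, s'`.  Then there exist a
transition kernel `P` and a reward function `r` such that, writing `QM` and `QM'` for the
optimal action-value functions (fixed points of the respective Bellman optimality operators)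
of the MDP `M = (S,A,P,r,γ)` and of the shaped MDP `M' = (S,A,P,r+F,γ)`, no deterministic
policy that is greedy with respect to `QM'` is greedy with respect to `QM`. -/
theorem pbrs_necessary_for_policy_invariance
    {S A : Type*} [Fintype S] [Fintype A] [Nonempty S] [Nonempty A]
    (hA : 2 ≤ Fintype.card A)
    (γ : ℝ) (hγ0 : 0 < γ) (hγ1 : γ < 1)
    (F : S → A → S → ℝ)
    (hF : ¬ ∃ Φ : S → ℝ, ∀ s a s', F s a s' = γ * Φ s' - Φ s) :
    ∃ P : S → A → S → ℝ,
      (∀ s a s', 0 ≤ P s a s') ∧ (∀ s a, ∑ s', P s a s' = 1) ∧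
      ∃ r : S → A → S → ℝ,
        ∀ QM QM' : S → A → ℝ,
          (∀ s a,
            QM s a = ∑ s', P s a s' *
              (r s a s' + γ * Finset.univ.sup' Finset.univ_nonempty fun a' => QM s' a')) →
          (∀ s a,
            QM' s a = ∑ s', P s a s' *
              ((r s a s' + F s a s') +
                γ * Finset.univ.sup' Finset.univ_nonempty fun a' => QM' s' a')) →
          ∀ pol : S → A,
            (∀ s b, QM' s b ≤ QM' s (pol s)) →
            ¬ (∀ s b, QM s b ≤ QM s (pol s)) := by
  classical
  by_cases hdep : ∀ s (a b : A) s', F s a s' = F s b s'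
  · -- Case 2 : F is action-independent
    push_neg at hF
    set a0 : A := Classical.arbitrary A with ha0
    set Φ : S → ℝ := fun s => F s a0 s / (γ - 1) with hΦdef
    obtain ⟨s₁, a₁, s₂, hw⟩ := hF Φ
    have hγne : γ - 1 ≠ 0 := by linarith
    have hkey : ∀ s, F s a0 s = (γ - 1) * Φ s := by
      intro s; rw [hΦdef]; field_simp
    have hs21 : s₂ ≠ s₁ := by
      intro h
      exact hw (by rw [h, hdep s₁ a₁ a0 s₁, hkey s₁]; ring)
    obtain ⟨b₀, hb₀⟩ := Fintype.exists_ne_of_one_lt_card (by omega) a0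
    set δ : ℝ := F s₁ a₁ s₂ - (γ * Φ s₂ - Φ s₁) with hδdef
    have hδ : δ ≠ 0 := sub_ne_zero.mpr hw
    have hFa0 : F s₁ a0 s₂ = δ + γ * Φ s₂ - Φ s₁ := by
      rw [hdep s₁ a0 a₁ s₂, hδdef]; ring
    rcases hδ.lt_or_gt with hneg | hpos
    · -- δ < 0
      set ε : ℝ := -δ / 2 with hε
      have hεpos : 0 < ε := by rw [hε]; linarith
      refine ⟨fun x c y => if y = (if x = s₁ ∧ c = a0 then s₂ else x) then 1 else 0,
        fun x c y => by dsimp only; split <;> split <;> norm_num,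
        fun x c => by simp,
        fun x c y => (if x = s₁ then (if c = a0 then 0 else (1 - γ) * ε) else 0) - F x c y,
        ?_⟩
      intro QM QM' hQM hQM' pol hg' hg
      set V : S → ℝ := fun u => Finset.univ.sup' Finset.univ_nonempty (fun c => QM u c) with hV
      set V' : S → ℝ := fun u => Finset.univ.sup' Finset.univ_nonempty (fun c => QM' u c) with hV'
      have EQ : ∀ u c, QM u c =
          ((if u = s₁ then (if c = a0 then 0 else (1 - γ) * ε) else 0)
            - F u c (if u = s₁ ∧ c = a0 then s₂ else u))
          + γ * V (if u = s₁ ∧ c = a0 then s₂ else u) := by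
        intro u c
        rw [hQM u c]
        exact sum_ind _ _
      have EQ' : ∀ u c, QM' u c =
          (if u = s₁ then (if c = a0 then 0 else (1 - γ) * ε) else 0)
          + γ * V' (if u = s₁ ∧ c = a0 then s₂ else u) := by
        intro u c
        rw [hQM' u c, sum_ind]
        ring
      -- values at s₂
      have h2 : ∀ c, QM s₂ c = -F s₂ a0 s₂ + γ * V s₂ := by
        intro c
        rw [EQ s₂ c, if_neg hs21, if_neg (fun h => hs21 h.1), hdep s₂ c a0 s₂]
        ring
      have hVs₂ : V s₂ = Φ s₂ := by
        have h1 : V s₂ = -F s₂ a0 s₂ + γ * V s₂ := by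
          have hrw : V s₂ = Finset.univ.sup' Finset.univ_nonempty
              (fun _ : A => -F s₂ a0 s₂ + γ * V s₂) :=
            Finset.sup'_congr Finset.univ_nonempty rfl (fun c _ => h2 c)
          rwa [Finset.sup'_const] at hrw
        have h2 := hkey s₂
        have h3 : (1 - γ) * V s₂ = (1 - γ) * Φ s₂ := by linarith
        exact mul_left_cancel₀ (by linarith) h3
      have h2' : ∀ c, QM' s₂ c = γ * V' s₂ := by
        intro c
        rw [EQ' s₂ c, if_neg hs21, if_neg (fun h => hs21 h.1)]
        ring
      have hV'2 : V' s₂ = 0 := by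
        have h1 : V' s₂ = γ * V' s₂ := by
          have hrw : V' s₂ = Finset.univ.sup' Finset.univ_nonempty
              (fun _ : A => γ * V' s₂) :=
            Finset.sup'_congr Finset.univ_nonempty rfl (fun c _ => h2' c)
          rwa [Finset.sup'_const] at hrw
        nlinarith
      -- shaped values at s₁
      have hQ'a0 : QM' s₁ a0 = 0 := by
        rw [EQ' s₁ a0, if_pos rfl, if_pos rfl, if_pos ⟨rfl, rfl⟩, hV'2]
        ring
      have hQ'b : ∀ c, c ≠ a0 → QM' s₁ c = (1 - γ) * ε + γ * V' s₁ := by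
        intro c hc
        rw [EQ' s₁ c, if_pos rfl, if_neg hc, if_neg (fun h => hc h.2)]
      have hQ'bge : ∀ c, c ≠ a0 → ε ≤ QM' s₁ c := by
        intro c hc
        have hle : QM' s₁ c ≤ V' s₁ := by
          rw [hV']; exact Finset.le_sup' _ (Finset.mem_univ c)
        have := hQ'b c hc
        nlinarith
      have hpol : pol s₁ ≠ a0 := by
        intro h
        have h1 := hg' s₁ b₀
        rw [h, hQ'a0] at h1
        exact absurd h1 (not_le.mpr (lt_of_lt_of_le hεpos (hQ'bge b₀ hb₀)))
      -- original values at s₁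
      have hqa0 : QM s₁ a0 = Φ s₁ - δ := by
        rw [EQ s₁ a0, if_pos rfl, if_pos rfl, if_pos ⟨rfl, rfl⟩, hVs₂, hFa0]
        ring
      have hqb : ∀ c, c ≠ a0 → QM s₁ c = (1 - γ) * ε - (γ - 1) * Φ s₁ + γ * V s₁ := by
        intro c hc
        rw [EQ s₁ c, if_pos rfl, if_neg hc, if_neg (fun h => hc h.2),
          hdep s₁ c a0 s₁, hkey s₁]
      have hub : V s₁ ≤ max (Φ s₁ - δ) ((1 - γ) * ε - (γ - 1) * Φ s₁ + γ * V s₁) := by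
        rw [hV]
        apply Finset.sup'_le
        intro c _
        by_cases hc : c = a0
        · subst hc; rw [hqa0]; exact le_max_left _ _
        · rw [hqb c hc]; exact le_max_right _ _
      have hgb := hg s₁ a0
      rw [hqa0, hqb (pol s₁) hpol] at hgb
      rcases le_max_iff.mp hub with h | h
      · nlinarith
      · nlinarith
    · -- δ > 0
      set ε : ℝ := (1 - γ) * δ / 2 with hε
      have hεpos : 0 < ε := by rw [hε]; nlinarith
      refine ⟨fun x c y => if y = (if x = s₁ ∧ c = a0 then s₂ else x) then 1 else 0,
        fun x c y => by dsimp only; split <;> split <;> norm_num,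
        fun x c => by simp,
        fun x c y => (if x = s₁ then (if c = a0 then ε else -(γ * ε)) else 0) - F x c y,
        ?_⟩
      intro QM QM' hQM hQM' pol hg' hg
      set V : S → ℝ := fun u => Finset.univ.sup' Finset.univ_nonempty (fun c => QM u c) with hV
      set V' : S → ℝ := fun u => Finset.univ.sup' Finset.univ_nonempty (fun c => QM' u c) with hV'
      have EQ : ∀ u c, QM u c =
          ((if u = s₁ then (if c = a0 then ε else -(γ * ε)) else 0)
            - F u c (if u = s₁ ∧ c = a0 then s₂ else u))
          + γ * V (if u = s₁ ∧ c = a0 then s₂ else u) := by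
        intro u c
        rw [hQM u c]
        exact sum_ind _ _
      have EQ' : ∀ u c, QM' u c =
          (if u = s₁ then (if c = a0 then ε else -(γ * ε)) else 0)
          + γ * V' (if u = s₁ ∧ c = a0 then s₂ else u) := by
        intro u c
        rw [hQM' u c, sum_ind]
        ring
      have h2 : ∀ c, QM s₂ c = -F s₂ a0 s₂ + γ * V s₂ := by
        intro c
        rw [EQ s₂ c, if_neg hs21, if_neg (fun h => hs21 h.1), hdep s₂ c a0 s₂]
        ring
      have hVs₂ : V s₂ = Φ s₂ := by
        have h1 : V s₂ = -F s₂ a0 s₂ + γ * V s₂ := by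
          have hrw : V s₂ = Finset.univ.sup' Finset.univ_nonempty
              (fun _ : A => -F s₂ a0 s₂ + γ * V s₂) :=
            Finset.sup'_congr Finset.univ_nonempty rfl (fun c _ => h2 c)
          rwa [Finset.sup'_const] at hrw
        have h2 := hkey s₂
        have h3 : (1 - γ) * V s₂ = (1 - γ) * Φ s₂ := by linarith
        exact mul_left_cancel₀ (by linarith) h3
      have h2' : ∀ c, QM' s₂ c = γ * V' s₂ := by
        intro c
        rw [EQ' s₂ c, if_neg hs21, if_neg (fun h => hs21 h.1)]
        ring
      have hV'2 : V' s₂ = 0 := by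
        have h1 : V' s₂ = γ * V' s₂ := by
          have hrw : V' s₂ = Finset.univ.sup' Finset.univ_nonempty
              (fun _ : A => γ * V' s₂) :=
            Finset.sup'_congr Finset.univ_nonempty rfl (fun c _ => h2' c)
          rwa [Finset.sup'_const] at hrw
        nlinarith
      have hQ'a0 : QM' s₁ a0 = ε := by
        rw [EQ' s₁ a0, if_pos rfl, if_pos rfl, if_pos ⟨rfl, rfl⟩, hV'2]
        ring
      have hQ'b : ∀ c, c ≠ a0 → QM' s₁ c = -(γ * ε) + γ * V' s₁ := by
        intro c hc
        rw [EQ' s₁ c, if_pos rfl, if_neg hc, if_neg (fun h => hc h.2)]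
      have hub' : V' s₁ ≤ ε := by
        have h1 : V' s₁ ≤ max ε (-(γ * ε) + γ * V' s₁) := by
          rw [hV']
          apply Finset.sup'_le
          intro c _
          by_cases hc : c = a0
          · subst hc; rw [hQ'a0]; exact le_max_left _ _
          · rw [hQ'b c hc]; exact le_max_right _ _
        rcases le_max_iff.mp h1 with h | h
        · exact h
        · nlinarith
      have hQ'blt : ∀ c, c ≠ a0 → QM' s₁ c < ε := by
        intro c hc
        rw [hQ'b c hc]
        nlinarith
      have hpol : pol s₁ = a0 := by
        by_contra hne
        have h1 := hg' s₁ a0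
        rw [hQ'a0] at h1
        exact absurd h1 (not_le.mpr (hQ'blt _ hne))
      have hqa0 : QM s₁ a0 = ε - δ + Φ s₁ := by
        rw [EQ s₁ a0, if_pos rfl, if_pos rfl, if_pos ⟨rfl, rfl⟩, hVs₂, hFa0]
        ring
      have hqb : QM s₁ b₀ = -(γ * ε) - (γ - 1) * Φ s₁ + γ * V s₁ := by
        rw [EQ s₁ b₀, if_pos rfl, if_neg hb₀, if_neg (fun h => hb₀ h.2),
          hdep s₁ b₀ a0 s₁, hkey s₁]
      have hlb : QM s₁ b₀ ≤ V s₁ := by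
        rw [hV]; exact Finset.le_sup' _ (Finset.mem_univ b₀)
      have hle := hg s₁ b₀
      rw [hpol, hqa0] at hle
      nlinarith [mul_le_mul_of_nonneg_left hlb hγ0.le]
  · -- Case 1 : F depends on the action somewhere
    push_neg at hdep
    obtain ⟨s, a₁, b₁, s', hab⟩ := hdep
    obtain ⟨a, b, hab⟩ : ∃ a b : A, F s a s' < F s b s' := by
      rcases hab.lt_or_gt with h | h
      exacts [⟨a₁, b₁, h⟩, ⟨b₁, a₁, h⟩]
    have hne : a ≠ b := fun h => by rw [h] at hab; exact lt_irrefl _ hab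
    set η : ℝ := (F s b s' - F s a s') / 2 with hη
    have hηpos : 0 < η := by rw [hη]; linarith
    refine ⟨fun x c y => if y = (if x = s then s' else x) then 1 else 0,
      fun x c y => by dsimp only; split <;> split <;> norm_num,
      fun x c => by simp,
      fun x c y => (if x = s ∧ c = b then η else 0) - F x c y,
      ?_⟩
    intro QM QM' hQM hQM' pol hg' hg
    set V : S → ℝ := fun u => Finset.univ.sup' Finset.univ_nonempty (fun c => QM u c) with hV
    set V' : S → ℝ := fun u => Finset.univ.sup' Finset.univ_nonempty (fun c => QM' u c) with hV'
    have EQ : ∀ u c, QM u c =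
        ((if u = s ∧ c = b then η else 0) - F u c (if u = s then s' else u))
        + γ * V (if u = s then s' else u) := by
      intro u c
      rw [hQM u c]
      exact sum_ind _ _
    have EQ' : ∀ u c, QM' u c =
        (if u = s ∧ c = b then η else 0) + γ * V' (if u = s then s' else u) := by
      intro u c
      rw [hQM' u c, sum_ind]
      ring
    have hpol : pol s = b := by
      by_contra hne'
      have h1 := hg' s b
      have e1 : QM' s b = η + γ * V' s' := by
        rw [EQ' s b, if_pos (⟨rfl, rfl⟩ : s = s ∧ b = b), if_pos rfl]
      have e2 : QM' s (pol s) = 0 + γ * V' s' := by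
        rw [EQ' s (pol s), if_neg (fun h : s = s ∧ pol s = b => hne' h.2), if_pos rfl]
      rw [e1, e2] at h1
      linarith
    have h2 := hg s a
    rw [hpol] at h2
    have e3 : QM s a = 0 - F s a s' + γ * V s' := by
      rw [EQ s a, if_neg (fun h : s = s ∧ a = b => hne h.2), if_pos rfl]
    have e4 : QM s b = η - F s b s' + γ * V s' := by
      rw [EQ s b, if_pos (⟨rfl, rfl⟩ : s = s ∧ b = b), if_pos rfl]
    rw [e3, e4, hη] at h2
    linarith
end

section
/- Let (S, A, P, γ) be a finite MDP skeleton with discount factor γ ∈ [0,1), let φ : S × A × S → ℝᵈ be a feature map, let W ∈ ℝᵈ, and suppose the reward function decomposes linearly as r(s,a,s') = ⟨φ(s,a,s'), W⟩. Let π : S → A be a deterministic policy. Then there exists a unique successor-feature function ψ : S × A → ℝᵈ satisfying ψ(s,a) = Σ_{s'} P(s'|s,a)·( φ(s,a,s') + γ·ψ(s', π(s')) ) for all (s,a), and the action-value function of π for the reward r satisfies Q^π(s,a) = ⟨ψ(s,a), W⟩ for all s ∈ S and a ∈ A. In particular, for any other task with reward r'(s,a,s') = ⟨φ(s,a,s'),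 W'⟩ (same transition kernel and features), the action-value function of the same policy π is Q'^π(s,a) = ⟨ψ(s,a), W'⟩ with the same ψ. -/
private lemma bellman_exists_unique
    {S A : Type*} [Fintype S] [Fintype A] [Nonempty S] [Nonempty A]
    (P : S → A → S → ℝ)
    (hP0 : ∀ s a s', 0 ≤ P s a s')
    (hP1 : ∀ s a, ∑ s', P s a s' = 1)
    (γ : ℝ) (hγ0 : 0 ≤ γ) (hγ1 : γ < 1)
    (pol : S → A) (c : S → A → S → ℝ) :
    ∃! f : S → A → ℝ, ∀ s a, f s a = ∑ s', P s a s' * (c s a s' + γ * f s' (pol s')) := by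
  set T : (S → A → ℝ) → (S → A → ℝ) :=
    fun f s a => ∑ s', P s a s' * (c s a s' + γ * f s' (pol s')) with hT
  have hlip : LipschitzWith ⟨γ, hγ0⟩ T := by
    apply LipschitzWith.of_dist_le_mul
    intro f g
    have hd : (0:ℝ) ≤ dist f g := dist_nonneg
    have hmul : (0:ℝ) ≤ γ * dist f g := mul_nonneg hγ0 hd
    have key : ∀ s a, dist (T f s a) (T g s a) ≤ γ * dist f g := by
      intro s a
      rw [Real.dist_eq]
      have hdiff : T f s a - T g s a
          = γ * ∑ s', P s a s' * (f s' (pol s') - g s' (pol s')) := by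
        simp only [hT]
        rw [← Finset.sum_sub_distrib, Finset.mul_sum]
        exact Finset.sum_congr rfl (fun s' _ => by ring)
      rw [hdiff, abs_mul, abs_of_nonneg hγ0]
      have habs : |∑ s', P s a s' * (f s' (pol s') - g s' (pol s'))| ≤ dist f g := by
        calc |∑ s', P s a s' * (f s' (pol s') - g s' (pol s'))|
            ≤ ∑ s', |P s a s' * (f s' (pol s') - g s' (pol s'))| :=
              Finset.abs_sum_le_sum_abs _ _
          _ ≤ ∑ s', P s a s' * dist f g := by
              apply Finset.sum_le_sum
              intro s' _
              rw [abs_mul, abs_of_nonneg (hP0 s a s')]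
              apply mul_le_mul_of_nonneg_left _ (hP0 s a s')
              calc |f s' (pol s') - g s' (pol s')|
                  = dist (f s' (pol s')) (g s' (pol s')) := (Real.dist_eq _ _).symm
                _ ≤ dist (f s') (g s') := dist_le_pi_dist _ _ _
                _ ≤ dist f g := dist_le_pi_dist _ _ _
          _ = dist f g := by rw [← Finset.sum_mul, hP1, one_mul]
      exact mul_le_mul_of_nonneg_left habs hγ0
    calc dist (T f) (T g) ≤ γ * dist f g := by
          rw [dist_pi_le_iff hmul]
          intro s
          rw [dist_pi_le_iff hmul]
          exact key s
      _ = (⟨γ, hγ0⟩ : NNReal) * dist f g := rfl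
  have hcon : ContractingWith ⟨γ, hγ0⟩ T := ⟨by exact_mod_cast hγ1, hlip⟩
  refine ⟨hcon.fixedPoint T, ?_, ?_⟩
  · intro s a
    conv_lhs => rw [← hcon.fixedPoint_isFixedPt]
  · intro g hg
    have : Function.IsFixedPt T g := by
      funext s a
      exact (hg s a).symm
    exact hcon.fixedPoint_unique this



/-- **Successor features decouple dynamics from rewards.**
Let `(S, A, P, γ)` be a finite MDP skeleton with `γ ∈ [0,1)`, `φ : S × A × S → ℝᵈ` a feature
map, `W ∈ ℝᵈ`, and suppose the reward decomposes linearly as `r(s,a,s') = ⟨φ(s,a,s'), W⟩`.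
For any deterministic policy `pol : S → A` there is a unique successor-feature function
`ψ : S × A → ℝᵈ` satisfying `ψ(s,a) = Σ_{s'} P(s'|s,a)·(φ(s,a,s') + γ ψ(s', pol(s')))`,
the action-value function of `pol` for reward `r` satisfies `Q^π(s,a) = ⟨ψ(s,a), W⟩`, and
for any other task with reward `r'(s,a,s') = ⟨φ(s,a,s'), W'⟩` (same kernel and features)
the action-value function of the same policy is `⟨ψ(s,a), W'⟩` with the same `ψ`. -/
theorem successor_features_value_decomposition
    {S A : Type*} [Fintype S] [Fintype A] [Nonempty S] [Nonempty A]
    (P : S → A → S → ℝ)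
    (hP0 : ∀ s a s', 0 ≤ P s a s')
    (hP1 : ∀ s a, ∑ s', P s a s' = 1)
    (γ : ℝ) (hγ0 : 0 ≤ γ) (hγ1 : γ < 1)
    (d : ℕ) (φ : S → A → S → Fin d → ℝ) (W : Fin d → ℝ)
    (r : S → A → S → ℝ)
    (hr : ∀ s a s', r s a s' = ∑ j, φ s a s' j * W j)
    (pol : S → A) :
    ∃ ψ : S → A → Fin d → ℝ,
      (∀ s a j, ψ s a j = ∑ s', P s a s' * (φ s a s' j + γ * ψ s' (pol s') j)) ∧
      (∀ ψ' : S → A → Fin d → ℝ,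
        (∀ s a j, ψ' s a j = ∑ s', P s a s' * (φ s a s' j + γ * ψ' s' (pol s') j)) →
        ψ' = ψ) ∧
      (∀ Q : S → A → ℝ,
        (∀ s a, Q s a = ∑ s', P s a s' * (r s a s' + γ * Q s' (pol s'))) →
        ∀ s a, Q s a = ∑ j, ψ s a j * W j) ∧
      (∀ W' : Fin d → ℝ, ∀ Q' : S → A → ℝ,
        (∀ s a, Q' s a = ∑ s', P s a s' *
          ((∑ j, φ s a s' j * W' j) + γ * Q' s' (pol s'))) →
        ∀ s a, Q' s a = ∑ j, ψ s a j * W' j) := by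
  -- coordinatewise fixed points
  have hj : ∀ j : Fin d, ∃! f : S → A → ℝ,
      ∀ s a, f s a = ∑ s', P s a s' * (φ s a s' j + γ * f s' (pol s')) :=
    fun j => bellman_exists_unique P hP0 hP1 γ hγ0 hγ1 pol (fun s a s' => φ s a s' j)
  choose F hF hFuniq using hj
  set ψ : S → A → Fin d → ℝ := fun s a j => F j s a with hψ
  have hψeq : ∀ s a j, ψ s a j = ∑ s', P s a s' * (φ s a s' j + γ * ψ s' (pol s') j) :=
    fun s a j => hF j s a
  -- the generic linear-task statement
  have hgen : ∀ W' : Fin d → ℝ, ∀ Q' : S → A → ℝ,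
      (∀ s a, Q' s a = ∑ s', P s a s' *
        ((∑ j, φ s a s' j * W' j) + γ * Q' s' (pol s'))) →
      ∀ s a, Q' s a = ∑ j, ψ s a j * W' j := by
    intro W' Q' hQ'
    obtain ⟨f, hf, huniq⟩ :=
      bellman_exists_unique P hP0 hP1 γ hγ0 hγ1 pol (fun s a s' => ∑ j, φ s a s' j * W' j)
    have h1 : Q' = f := huniq Q' hQ'
    have h2 : (fun s a => ∑ j, ψ s a j * W' j) = f := by
      apply huniq
      intro s a
      calc ∑ j, ψ s a j * W' j
          = ∑ j, (∑ s', P s a s' * (φ s a s' j + γ * ψ s' (pol s') j)) * W' j := by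
            exact Finset.sum_congr rfl (fun j _ => by rw [hψeq s a j])
        _ = ∑ s', ∑ j, P s a s' * (φ s a s' j + γ * ψ s' (pol s') j) * W' j := by
            rw [Finset.sum_comm]
            exact Finset.sum_congr rfl (fun j _ => Finset.sum_mul _ _ _)
        _ = ∑ s', P s a s' *
              ((∑ j, φ s a s' j * W' j) + γ * ∑ j, ψ s' (pol s') j * W' j) := by
            refine Finset.sum_congr rfl (fun s' _ => ?_)
            simp only [mul_add, Finset.mul_sum, ← Finset.sum_add_distrib]
            exact Finset.sum_congr rfl (fun j _ => by ring)
    intro s a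
    rw [h1, ← h2]
  refine ⟨ψ, hψeq, ?_, ?_, hgen⟩
  · intro ψ' hψ'
    funext s a j
    have : (fun s a => ψ' s a j) = F j := hFuniq j _ (fun s a => hψ' s a j)
    exact congrFun (congrFun this s) a
  · intro Q hQ
    apply hgen W Q
    intro s a
    rw [hQ s a]
    exact Finset.sum_congr rfl (fun s' _ => by rw [hr])
end

section
/- Let X be a nonempty finite set and let p, q : X → ℝ be nonnegative weight functions with p(x) + q(x) > 0 for every x ∈ X. Then among all discriminators D : X → ℝ with 0 < D(x) < 1 for all x, the objective J(D) = Σ_{x ∈ X} ( p(x)·log D(x) + q(x)·log(1 − D(x)) ) is maximized by D*(x) = p(x) / (p(x) + q(x)); that is, J(D) ≤ J(D*) for every such D. -/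
/-! The objective decouples over `x`, so it suffices to maximize
`d ↦ p log d + q log (1 - d)` on `(0, 1)` for fixed weights. Writing `s = p + q`, the tangent-line
bound `log t ≤ t - 1` at `t = s d / p` and at `t = s (1 - d) / q` gives
`p log d ≤ p log (p / s) + (s d - p)` and `q log (1 - d) ≤ q log (q / s) + (s (1 - d) - q)`;
the two linear error terms cancel on adding, since `s d + s (1 - d) = p + q`. -/

open Real

lemma mul_log_le_mul_log_div_add {a b s : ℝ} (ha : 0 ≤ a) (hb : 0 < b) (hs : 0 < s) :
    a * log b ≤ a * log (a / s) + (s * b - a) := by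
  rcases ha.eq_or_lt with rfl | ha
  · simp only [zero_mul, zero_div, log_zero, sub_zero, zero_add]
    positivity
  have hlog : log (b / (a / s)) ≤ b / (a / s) - 1 := log_le_sub_one_of_pos (by positivity)
  rw [log_div hb.ne' (by positivity)] at hlog
  have hscale : a * (b / (a / s) - 1) = s * b - a := by field_simp
  nlinarith [mul_le_mul_of_nonneg_left hlog ha.le]

lemma mul_log_add_mul_log_one_sub_le {p q d : ℝ} (hp : 0 ≤ p) (hq : 0 ≤ q) (hpq : 0 < p + q)
    (hd₀ : 0 < d) (hd₁ : d < 1) :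
    p * log d + q * log (1 - d) ≤
      p * log (p / (p + q)) + q * log (1 - p / (p + q)) := by
  rw [one_sub_div hpq.ne', add_sub_cancel_left]
  linarith [mul_log_le_mul_log_div_add hp hd₀ hpq,
    mul_log_le_mul_log_div_add hq (sub_pos.mpr hd₁) hpq]

theorem optimal_discriminator_general
    {X : Type*} [Fintype X]
    (p q : X → ℝ)
    (hp : ∀ x, 0 ≤ p x) (hq : ∀ x, 0 ≤ q x)
    (hpq : ∀ x, 0 < p x + q x)
    (D : X → ℝ) (hD : ∀ x, 0 < D x ∧ D x < 1) :
    ∑ x, (p x * Real.log (D x) + q x * Real.log (1 - D x)) ≤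
      ∑ x, (p x * Real.log (p x / (p x + q x)) +
        q x * Real.log (1 - p x / (p x + q x))) :=
  Finset.sum_le_sum fun x _ ↦
    mul_log_add_mul_log_one_sub_le (hp x) (hq x) (hpq x) (hD x).1 (hD x).2

/-- **Optimal discriminator in adversarial imitation learning.**
Let `X` be a nonempty finite set and `p, q : X → ℝ` nonnegative weight functions with
`p(x) + q(x) > 0` for all `x`.  Then among all discriminators `D : X → ℝ` with
`0 < D(x) < 1`, the objective `J(D) = Σₓ (p(x)·log D(x) + q(x)·log(1 - D(x)))` is maximized
by `D*(x) = p(x)/(p(x) + q(x))`, i.e. `J(D) ≤ J(D*)` for every such `D`. -/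
theorem optimal_discriminator
    {X : Type*} [Fintype X] [Nonempty X]
    (p q : X → ℝ)
    (hp : ∀ x, 0 ≤ p x) (hq : ∀ x, 0 ≤ q x)
    (hpq : ∀ x, 0 < p x + q x)
    (D : X → ℝ) (hD : ∀ x, 0 < D x ∧ D x < 1) :
    ∑ x, (p x * Real.log (D x) + q x * Real.log (1 - D x)) ≤
      ∑ x, (p x * Real.log (p x / (p x + q x)) +
        q x * Real.log (1 - p x / (p x + q x))) :=
  optimal_discriminator_general p q hp hq hpq D hD
end

section
/- Let X be a nonempty finite set and let p, q be probability mass functions on X with p(x) + q(x) > 0 for all x ∈ X, and let m = (p + q)/2 be their midpoint distribution. Then the supremum over all discriminators D : X → ℝ with 0 < D(x) < 1 of the objective J(D) = Σ_{x ∈ X} ( p(x)·log D(x) + q(x)·log(1 − D(x)) ) equals −log 4 + KL(p ‖ m) + KL(q ‖ m), where KL(p ‖ m) = Σ_{x : p(x) > 0} p(x)·log( p(x)/m(x) ); moreover this supremum is attained by D*(x) = p(x)/(p(x)+q(x)). Equivalently, the optimal adversarial objective equals −log 4 plus twice the Jensen–Shannon divergence between p and q. -/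
/-!
The objective splits into independent binary problems `a log t + b log (1 - t)`, each of which
is maximised at `t = a / (a + b)` by `log x ≤ x - 1`.  The optimum `D*` may take the values
`0` or `1` (where `p` or `q` vanishes) and so lie outside the open box of discriminators, but
it lies in its closure and the objective is continuous at `D*` (the logarithms that blow up
there carry a zero weight), so its value there is still the supremum.  Finally
`p log (p / m) = p log (p / (p + q)) + p log 2`, and summing gives the `-log 4`.
-/

open Real Set

lemma mul_log_le_mul_log_div_add_sub {a c u : ℝ} (ha : 0 ≤ a) (hc : 0 < c) (hu : 0 < u) :
    a * log u ≤ a * log (a / c) + (c * u - a) := by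
  rcases ha.eq_or_lt with rfl | ha
  · simp only [zero_mul, zero_div, log_zero, sub_zero, zero_add]
    positivity
  have key := log_le_sub_one_of_pos (show 0 < u * c / a by positivity)
  rw [log_div (by positivity) ha.ne', log_mul hu.ne' hc.ne'] at key
  have key' := mul_le_mul_of_nonneg_left key ha.le
  have hcancel : a * (u * c / a - 1) = c * u - a := by field_simp
  rw [log_div ha.ne' hc.ne']
  linarith

lemma mul_log_add_mul_log_one_sub_le_s11 {a b t : ℝ} (ha : 0 ≤ a) (hb : 0 ≤ b) (hab : 0 < a + b)
    (ht₀ : 0 < t) (ht₁ : t < 1) :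
    a * log t + b * log (1 - t) ≤ a * log (a / (a + b)) + b * log (1 - a / (a + b)) := by
  rw [one_sub_div hab.ne', add_sub_cancel_left]
  have hta := mul_log_le_mul_log_div_add_sub ha hab ht₀
  have htb := mul_log_le_mul_log_div_add_sub hb hab (sub_pos.2 ht₁)
  linear_combination hta + htb

lemma continuousAt_const_mul_log {a t : ℝ} (h : t = 0 → a = 0) :
    ContinuousAt (fun s => a * log s) t := by
  by_cases ht : t = 0
  · simp only [h ht, zero_mul]
    exact continuousAt_const
  · exact continuousAt_const.mul (continuousAt_log ht)

lemma mul_log_div_half (a : ℝ) {s : ℝ} (hs : s ≠ 0) :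
    a * log (a / (s / 2)) = a * log (a / s) + a * log 2 := by
  rcases eq_or_ne a 0 with rfl | ha
  · simp
  rw [show a / (s / 2) = 2 * (a / s) by ring, log_mul two_ne_zero (div_ne_zero ha hs)]
  ring

section

variable {X : Type*}

noncomputable def adversarialObjective [Fintype X] (p q : X → ℝ) (D : X → ℝ) : ℝ :=
  ∑ x, (p x * log (D x) + q x * log (1 - D x))

noncomputable def optimalDiscriminator (p q : X → ℝ) (x : X) : ℝ :=
  p x / (p x + q x)

variable {p q : X → ℝ}

lemma optimalDiscriminator_mem_closure (hp₀ : ∀ x, 0 ≤ p x) (hq₀ : ∀ x, 0 ≤ q x)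
    (hpq : ∀ x, 0 < p x + q x) :
    optimalDiscriminator p q ∈ closure (univ.pi fun _ => Ioo (0 : ℝ) 1) := by
  rw [closure_pi_set, closure_Ioo zero_ne_one]
  intro x _
  exact ⟨div_nonneg (hp₀ x) (hpq x).le,
    div_le_one_of_le₀ (le_add_of_nonneg_right (hq₀ x)) (hpq x).le⟩

variable [Fintype X]

lemma sum_ite_pos_mul_log_div_half {s : X → ℝ} (hp₀ : ∀ x, 0 ≤ p x) (hp₁ : ∑ x, p x = 1)
    (hs : ∀ x, s x ≠ 0) :
    (∑ x, if 0 < p x then p x * log (p x / (s x / 2)) else 0) =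
      ∑ x, p x * log (p x / s x) + log 2 := by
  have hterm : ∀ x, (if 0 < p x then p x * log (p x / (s x / 2)) else 0) =
      p x * log (p x / s x) + p x * log 2 := by
    intro x
    rw [← mul_log_div_half _ (hs x)]
    split_ifs with hpos
    · rfl
    · simp [le_antisymm (not_lt.1 hpos) (hp₀ x)]
  simp only [hterm, Finset.sum_add_distrib, ← Finset.sum_mul, hp₁, one_mul]

lemma adversarialObjective_le_optimalDiscriminator (hp₀ : ∀ x, 0 ≤ p x) (hq₀ : ∀ x, 0 ≤ q x)
    (hpq : ∀ x, 0 < p x + q x) {D : X → ℝ} (hD : D ∈ univ.pi fun _ => Ioo 0 1) :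
    adversarialObjective p q D ≤ adversarialObjective p q (optimalDiscriminator p q) :=
  Finset.sum_le_sum fun x _ =>
    mul_log_add_mul_log_one_sub_le_s11 (hp₀ x) (hq₀ x) (hpq x) (hD x trivial).1 (hD x trivial).2

lemma continuousAt_adversarialObjective_optimalDiscriminator (hpq : ∀ x, 0 < p x + q x) :
    ContinuousAt (adversarialObjective p q) (optimalDiscriminator p q) := by
  refine tendsto_finsetSum _ fun x _ => ContinuousAt.add ?_ ?_
  · refine (continuousAt_const_mul_log fun h => ?_).comp (continuousAt_apply x _)
    exact (div_eq_zero_iff.1 h).resolve_right (hpq x).ne'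
  · refine (continuousAt_const_mul_log fun h => ?_).comp
      (continuousAt_const.sub (continuousAt_apply x _))
    rw [optimalDiscriminator, one_sub_div (hpq x).ne', add_sub_cancel_left] at h
    exact (div_eq_zero_iff.1 h).resolve_right (hpq x).ne'

lemma adversarialObjective_optimalDiscriminator (hp₀ : ∀ x, 0 ≤ p x) (hq₀ : ∀ x, 0 ≤ q x)
    (hp₁ : ∑ x, p x = 1) (hq₁ : ∑ x, q x = 1) (hpq : ∀ x, 0 < p x + q x) :
    adversarialObjective p q (optimalDiscriminator p q) =
      -log 4 +
        (∑ x, if 0 < p x then p x * log (p x / ((p x + q x) / 2)) else 0) +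
        (∑ x, if 0 < q x then q x * log (q x / ((p x + q x) / 2)) else 0) := by
  have hs : ∀ x, p x + q x ≠ 0 := fun x => (hpq x).ne'
  have hlog4 : log 4 = 2 * log 2 := by
    rw [show (4 : ℝ) = 2 ^ 2 by norm_num, log_pow, Nat.cast_ofNat]
  rw [sum_ite_pos_mul_log_div_half hp₀ hp₁ hs, sum_ite_pos_mul_log_div_half hq₀ hq₁ hs,
    adversarialObjective, Finset.sum_add_distrib, hlog4]
  simp only [optimalDiscriminator, one_sub_div (hs _), add_sub_cancel_left]
  ring

end

theorem adversarial_objective_jensen_shannon_general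
    {X : Type*} [Fintype X]
    (p q : X → ℝ)
    (hp0 : ∀ x, 0 ≤ p x) (hq0 : ∀ x, 0 ≤ q x)
    (hp1 : ∑ x, p x = 1) (hq1 : ∑ x, q x = 1)
    (hpq : ∀ x, 0 < p x + q x) :
    IsLUB
      {v : ℝ | ∃ D : X → ℝ, (∀ x, 0 < D x ∧ D x < 1) ∧
        v = ∑ x, (p x * Real.log (D x) + q x * Real.log (1 - D x))}
      (-Real.log 4 +
        (∑ x, if 0 < p x then p x * Real.log (p x / ((p x + q x) / 2)) else 0) +
        (∑ x, if 0 < q x then q x * Real.log (q x / ((p x + q x) / 2)) else 0)) ∧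
    (∑ x, (p x * Real.log (p x / (p x + q x)) +
        q x * Real.log (1 - p x / (p x + q x)))) =
      -Real.log 4 +
        (∑ x, if 0 < p x then p x * Real.log (p x / ((p x + q x) / 2)) else 0) +
        (∑ x, if 0 < q x then q x * Real.log (q x / ((p x + q x) / 2)) else 0) := by
  have hvalue := adversarialObjective_optimalDiscriminator hp0 hq0 hp1 hq1 hpq
  have hvalues : {v : ℝ | ∃ D : X → ℝ, (∀ x, 0 < D x ∧ D x < 1) ∧
      v = ∑ x, (p x * Real.log (D x) + q x * Real.log (1 - D x))} =
      adversarialObjective p q '' univ.pi fun _ => Ioo 0 1 := by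
    ext v
    simp [adversarialObjective, eq_comm]
  refine ⟨?_, hvalue⟩
  rw [hvalues, ← hvalue]
  refine isLUB_of_mem_closure ?_ (mem_closure_image
    (continuousAt_adversarialObjective_optimalDiscriminator hpq)
    (optimalDiscriminator_mem_closure hp0 hq0 hpq))
  rintro _ ⟨D, hD, rfl⟩
  exact adversarialObjective_le_optimalDiscriminator hp0 hq0 hpq hD

/-- **The optimal adversarial objective measures the Jensen–Shannon divergence.**
Let `X` be a nonempty finite set, `p, q` probability mass functions on `X` with
`p(x) + q(x) > 0` for all `x`, and `m = (p + q)/2` their midpoint.  Then the supremum over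
all discriminators `D : X → ℝ` with `0 < D(x) < 1` of
`J(D) = Σₓ (p(x)·log D(x) + q(x)·log(1 - D(x)))` equals
`-log 4 + KL(p ‖ m) + KL(q ‖ m)` (which is `-log 4` plus twice the Jensen–Shannon
divergence of `p` and `q`), and this value is attained by `D*(x) = p(x)/(p(x)+q(x))`. -/
theorem adversarial_objective_jensen_shannon
    {X : Type*} [Fintype X] [Nonempty X]
    (p q : X → ℝ)
    (hp0 : ∀ x, 0 ≤ p x) (hq0 : ∀ x, 0 ≤ q x)
    (hp1 : ∑ x, p x = 1) (hq1 : ∑ x, q x = 1)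
    (hpq : ∀ x, 0 < p x + q x) :
    IsLUB
      {v : ℝ | ∃ D : X → ℝ, (∀ x, 0 < D x ∧ D x < 1) ∧
        v = ∑ x, (p x * Real.log (D x) + q x * Real.log (1 - D x))}
      (-Real.log 4 +
        (∑ x, if 0 < p x then p x * Real.log (p x / ((p x + q x) / 2)) else 0) +
        (∑ x, if 0 < q x then q x * Real.log (q x / ((p x + q x) / 2)) else 0)) ∧
    (∑ x, (p x * Real.log (p x / (p x + q x)) +
        q x * Real.log (1 - p x / (p x + q x)))) =
      -Real.log 4 +
        (∑ x, if 0 < p x then p x * Real.log (p x / ((p x + q x) / 2)) else 0) +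
        (∑ x, if 0 < q x then q x * Real.log (q x / ((p x + q x) / 2)) else 0) :=
  adversarial_objective_jensen_shannon_general p q hp0 hq0 hp1 hq1 hpq
end
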